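/- Let S0 and S1 be nonempty finite subsets of ℝ² in general position. Then S0 and S1 have an outer common tangent if and only if neither the convex hull of S0 is contained in the convex hull of S1 nor the convex hull of S1 is contained in the convex hull of S0. -/

import Mathlib

/-- Finite sets `S0, S1 ⊆ ℝ²` are in *general position* if they are disjoint
and no three distinct points of `S0 ∪ S1` are collinear. -/
def InGeneralPosition (S0 S1 : Set (ℝ × ℝ)) : Prop :=
  S0 ∩ S1 = ∅ ∧
    ∀ a ∈ S0 ∪ S1, ∀ b ∈ S0 ∪ S1, ∀ c ∈ S0 ∪ S1,
      a ≠ b → a ≠ c → b ≠ c → ¬ Collinear ℝ ({a, b, c} : Set (ℝ × ℝ))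

/-- The line `{x | f x = c}` is an *outer common tangent* of `S0` and `S1` if
it intersects the convex hulls of both sets and `S0 ∪ S1` is contained in one
of the two closed half-planes of the line. -/
def IsOuterCommonTangent (f : ℝ × ℝ →ₗ[ℝ] ℝ) (c : ℝ) (S0 S1 : Set (ℝ × ℝ)) : Prop :=
  ({x | f x = c} ∩ convexHull ℝ S0).Nonempty ∧
  ({x | f x = c} ∩ convexHull ℝ S1).Nonempty ∧
    (S0 ∪ S1 ⊆ {x | f x ≤ c} ∨ S0 ∪ S1 ⊆ {x | c ≤ f x})

/-!
If a tangent line `ℓ` with both sets on one side meets `conv S0 ⊆ conv S1`, then `ℓ ∩ conv S0` is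
a face of `conv S0`, so `ℓ` passes through a point `a ∈ S0`. Since `a ∉ S1` lies in the face
`ℓ ∩ conv S1 = conv (S1 ∩ ℓ)`, the line `ℓ` carries two points of `S1`, and together with `a`
they violate general position.

Conversely, separating a point of `S1` from `conv S0`, and a point of `S0` from `conv S1`, gives
two functionals on which the support functions `g ↦ max_{S_i} g` compare in opposite ways. The
nonzero functionals on the plane form a connected set, so by the intermediate value theorem the
two support functions agree at some `g ≠ 0`, and the line where `g` attains this common maximum
is an outer common tangent.
-/

open Module

lemma Set.nontrivial_of_mem_convexHull_of_notMem {𝕜 E : Type*} [Semiring 𝕜] [PartialOrder 𝕜]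
    [AddCommMonoid E] [Module 𝕜 E] {s : Set E} {x : E} (hx : x ∈ convexHull 𝕜 s)
    (hxs : x ∉ s) : s.Nontrivial := by
  by_contra h
  rw [Set.not_nontrivial_iff] at h
  rw [(h.convex (𝕜 := 𝕜)).convexHull_eq] at hx
  exact hxs hx

lemma mem_convexHull_setOf_eq_of_forall_le {𝕜 E : Type*} [Field 𝕜] [LinearOrder 𝕜]
    [IsStrictOrderedRing 𝕜] [AddCommGroup E] [Module 𝕜 E] {T : Set E} {f : E →ₗ[𝕜] 𝕜} {c : 𝕜}
    (hT : ∀ t ∈ T, f t ≤ c) {x : E} (hx : x ∈ convexHull 𝕜 T) (hfx : f x = c) :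
    x ∈ convexHull 𝕜 {t ∈ T | f t = c} := by
  classical
  obtain ⟨ι, s, w, z, hw₀, hw₁, hz, rfl⟩ := (convexHull_eq T).subset hx
  have hle : ∀ i ∈ s, w i * f (z i) ≤ w i * c := fun i hi =>
    mul_le_mul_of_nonneg_left (hT _ (hz i hi)) (hw₀ i hi)
  have hsum : ∑ i ∈ s, w i * f (z i) = ∑ i ∈ s, w i * c := by
    rw [← Finset.sum_mul, hw₁, one_mul, ← hfx, Finset.centerMass_eq_of_sum_1 _ _ hw₁, map_sum]
    simp only [map_smul, smul_eq_mul]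
  have hface : ∀ i ∈ s, w i ≠ 0 → f (z i) = c := fun i hi hwi =>
    mul_left_cancel₀ hwi ((Finset.sum_eq_sum_iff_of_le hle).1 hsum i hi)
  rw [← Finset.centerMass_filter_ne_zero]
  refine Finset.centerMass_mem_convexHull _ (fun i hi => hw₀ i (Finset.mem_filter.1 hi).1)
    (by rw [Finset.sum_filter_ne_zero, hw₁]; exact one_pos) fun i hi => ?_
  obtain ⟨his, hwi⟩ := Finset.mem_filter.1 hi
  exact ⟨hz i his, hface i his hwi⟩

lemma collinear_setOf_eq {K V : Type*} [Field K] [AddCommGroup V] [Module K V]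
    [FiniteDimensional K V] (hV : finrank K V ≤ 2) {f : V →ₗ[K] K} (hf : f ≠ 0) (c : K) :
    Collinear K {x | f x = c} := by
  have hspan : vectorSpan K {x | f x = c} ≤ LinearMap.ker f := by
    rw [vectorSpan_def, Submodule.span_le]
    rintro _ ⟨x, hx, y, hy, rfl⟩
    simp_all
  have hker : LinearMap.ker f ≠ ⊤ := fun h => hf (LinearMap.ker_eq_top.1 h)
  rw [collinear_iff_finrank_le_one]
  have := (Submodule.finrank_mono hspan).trans_lt (Submodule.finrank_lt hker)
  omega

lemma InGeneralPosition.symm {S0 S1 : Set (ℝ × ℝ)} (h : InGeneralPosition S0 S1) :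
    InGeneralPosition S1 S0 := by
  rw [InGeneralPosition, Set.inter_comm, Set.union_comm]
  exact h

lemma IsOuterCommonTangent.symm {f : ℝ × ℝ →ₗ[ℝ] ℝ} {c : ℝ} {S0 S1 : Set (ℝ × ℝ)}
    (h : IsOuterCommonTangent f c S0 S1) : IsOuterCommonTangent f c S1 S0 := by
  rw [IsOuterCommonTangent, Set.union_comm]
  exact ⟨h.2.1, h.1, h.2.2⟩

lemma InGeneralPosition.not_convexHull_subset_of_forall_le {S0 S1 : Set (ℝ × ℝ)}
    (hgen : InGeneralPosition S0 S1) {f : ℝ × ℝ →ₗ[ℝ] ℝ} (hf : f ≠ 0) {c : ℝ}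
    (hℓ : ({x | f x = c} ∩ convexHull ℝ S0).Nonempty) (hle : S0 ∪ S1 ⊆ {x | f x ≤ c}) :
    ¬ convexHull ℝ S0 ⊆ convexHull ℝ S1 := by
  intro hsub
  obtain ⟨y, hyc, hy⟩ := hℓ
  obtain ⟨a, haS0, hac⟩ : {t ∈ S0 | f t = c}.Nonempty := convexHull_nonempty_iff.1
    ⟨y, mem_convexHull_setOf_eq_of_forall_le (fun t ht => hle (.inl ht)) hy hyc⟩
  have haS1 : a ∉ S1 := fun ha => (hgen.1 ▸ ⟨haS0, ha⟩ : a ∈ (∅ : Set (ℝ × ℝ)))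
  have ha : a ∈ convexHull ℝ {t ∈ S1 | f t = c} := mem_convexHull_setOf_eq_of_forall_le
    (fun t ht => hle (.inr ht)) (hsub (subset_convexHull ℝ S0 haS0)) hac
  obtain ⟨b, ⟨hbS1, hbc⟩, b', ⟨hb'S1, hb'c⟩, hbb'⟩ :=
    Set.nontrivial_of_mem_convexHull_of_notMem ha fun h => haS1 h.1
  refine hgen.2 a (.inl haS0) b (.inr hbS1) b' (.inr hb'S1) (ne_of_mem_of_not_mem hbS1 haS1).symm
    (ne_of_mem_of_not_mem hb'S1 haS1).symm hbb' ((collinear_setOf_eq (by simp) hf c).subset ?_)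
  rintro x (rfl | rfl | rfl) <;> assumption

lemma InGeneralPosition.not_convexHull_subset {S0 S1 : Set (ℝ × ℝ)}
    (hgen : InGeneralPosition S0 S1) {f : ℝ × ℝ →ₗ[ℝ] ℝ} (hf : f ≠ 0) {c : ℝ}
    (ht : IsOuterCommonTangent f c S0 S1) : ¬ convexHull ℝ S0 ⊆ convexHull ℝ S1 := by
  obtain ⟨hℓ, -, hle | hge⟩ := ht
  · exact hgen.not_convexHull_subset_of_forall_le hf hℓ hle
  · refine hgen.not_convexHull_subset_of_forall_le (neg_ne_zero.2 hf) (c := -c) ?_ ?_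
    · simpa only [LinearMap.neg_apply, neg_inj] using hℓ
    · intro x hx
      simpa using hge hx

section SupportingLine

variable {E : Type*} [NormedAddCommGroup E] [NormedSpace ℝ E]

lemma exists_sup'_lt_sup' {s t : Finset E} (hs : s.Nonempty) (ht : t.Nonempty) {b : E}
    (hb : b ∈ t) (hbs : b ∉ convexHull ℝ (s : Set E)) :
    ∃ g : E →L[ℝ] ℝ, s.sup' hs g < t.sup' ht g := by
  obtain ⟨g, u, hgs, hgb⟩ := geometric_hahn_banach_closed_point (convex_convexHull ℝ _)
    (s.finite_toSet.isCompact_convexHull (𝕜 := ℝ)).isClosed hbs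
  refine ⟨g, ?_⟩
  calc s.sup' hs g < u := (Finset.sup'_lt_iff hs).2 fun x hx => hgs x (subset_convexHull ℝ _ hx)
    _ < g b := hgb
    _ ≤ t.sup' ht g := Finset.le_sup' g hb

lemma one_lt_rank_strongDual [FiniteDimensional ℝ E] (hE : 1 < finrank ℝ E) :
    1 < Module.rank ℝ (StrongDual ℝ E) := by
  rw [← Module.finrank_eq_rank,
    ← (LinearMap.toContinuousLinearMap (𝕜 := ℝ) (E := E) (F' := ℝ)).finrank_eq,
    Subspace.dual_finrank_eq]
  exact_mod_cast hE

lemma exists_ne_zero_sup'_eq_sup' [FiniteDimensional ℝ E] (hE : 1 < finrank ℝ E)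
    {s t : Finset E} (hs : s.Nonempty) (ht : t.Nonempty) {a b : E} (ha : a ∈ s)
    (hat : a ∉ convexHull ℝ (t : Set E)) (hb : b ∈ t) (hbs : b ∉ convexHull ℝ (s : Set E)) :
    ∃ g : E →L[ℝ] ℝ, g ≠ 0 ∧ s.sup' hs g = t.sup' ht g := by
  obtain ⟨g₁, h₁⟩ := exists_sup'_lt_sup' hs ht hb hbs
  obtain ⟨g₂, h₂⟩ := exists_sup'_lt_sup' ht hs ha hat
  have hmem : ∀ g : E →L[ℝ] ℝ, s.sup' hs g ≠ t.sup' ht g → g ∈ ({0}ᶜ : Set (E →L[ℝ] ℝ)) := by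
    rintro g hg rfl
    simp at hg
  have hcont : ∀ (u : Finset E) (hu : u.Nonempty),
      Continuous fun g : E →L[ℝ] ℝ => u.sup' hu fun x => g x := fun u hu =>
    Continuous.finset_sup'_apply hu fun x _ => (ContinuousLinearMap.apply ℝ ℝ x).continuous
  exact (isConnected_compl_singleton_of_one_lt_rank (one_lt_rank_strongDual hE) 0).isPreconnected
    |>.intermediate_value₂ (hmem _ h₁.ne) (hmem _ h₂.ne') (hcont s hs).continuousOn
      (hcont t ht).continuousOn h₁.le h₂.le

lemma exists_common_supportingHyperplane [FiniteDimensional ℝ E] (hE : 1 < finrank ℝ E)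
    {S T : Set E} (hS : S.Finite) (hT : T.Finite) (hST : ¬ convexHull ℝ S ⊆ convexHull ℝ T)
    (hTS : ¬ convexHull ℝ T ⊆ convexHull ℝ S) :
    ∃ g : E →L[ℝ] ℝ, g ≠ 0 ∧ ∃ c, (∃ x ∈ S, g x = c) ∧ (∃ y ∈ T, g y = c) ∧
      ∀ z ∈ S ∪ T, g z ≤ c := by
  lift S to Finset E using hS
  lift T to Finset E using hT
  rw [(convex_convexHull ℝ _).convexHull_subset_iff, Set.not_subset] at hST hTS
  obtain ⟨a, ha, hat⟩ := hST
  obtain ⟨b, hb, hbs⟩ := hTS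
  obtain ⟨g, hg0, hg⟩ := exists_ne_zero_sup'_eq_sup' hE ⟨a, ha⟩ ⟨b, hb⟩ ha hat hb hbs
  obtain ⟨x, hx, hgx⟩ := Finset.exists_mem_eq_sup' ⟨a, ha⟩ g
  obtain ⟨y, hy, hgy⟩ := Finset.exists_mem_eq_sup' ⟨b, hb⟩ g
  refine ⟨g, hg0, _, ⟨x, hx, hgx.symm⟩, ⟨y, hy, (hg.trans hgy).symm⟩, ?_⟩
  rintro z (hz | hz)
  · exact Finset.le_sup' g hz
  · exact hg ▸ Finset.le_sup' g hz

end SupportingLine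

theorem outerCommonTangent_iff_not_nested_general (S0 S1 : Set (ℝ × ℝ))
    (h0fin : S0.Finite) (h1fin : S1.Finite)
    (hgen : InGeneralPosition S0 S1) :
    (∃ (f : ℝ × ℝ →ₗ[ℝ] ℝ) (c : ℝ), f ≠ 0 ∧ IsOuterCommonTangent f c S0 S1) ↔
      (¬ convexHull ℝ S0 ⊆ convexHull ℝ S1 ∧ ¬ convexHull ℝ S1 ⊆ convexHull ℝ S0) := by
  constructor
  · rintro ⟨f, c, hf, ht⟩
    exact ⟨hgen.not_convexHull_subset hf ht, hgen.symm.not_convexHull_subset hf ht.symm⟩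
  · rintro ⟨h01, h10⟩
    obtain ⟨g, hg0, c, ⟨x, hx, hgx⟩, ⟨y, hy, hgy⟩, hle⟩ :=
      exists_common_supportingHyperplane (by simp) h0fin h1fin h01 h10
    refine ⟨g, c, ContinuousLinearMap.coe_injective.ne hg0, ⟨x, hgx, subset_convexHull ℝ _ hx⟩,
      ⟨y, hgy, subset_convexHull ℝ _ hy⟩, .inl hle⟩

/-- Nonempty finite sets `S0` and `S1` in general position have an outer
common tangent if and only if neither convex hull is contained in the other. -/
theorem outerCommonTangent_iff_not_nested (S0 S1 : Set (ℝ × ℝ))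
    (h0fin : S0.Finite) (h1fin : S1.Finite)
    (h0ne : S0.Nonempty) (h1ne : S1.Nonempty)
    (hgen : InGeneralPosition S0 S1) :
    (∃ (f : ℝ × ℝ →ₗ[ℝ] ℝ) (c : ℝ), f ≠ 0 ∧ IsOuterCommonTangent f c S0 S1) ↔
      (¬ convexHull ℝ S0 ⊆ convexHull ℝ S1 ∧ ¬ convexHull ℝ S1 ⊆ convexHull ℝ S0) :=
  outerCommonTangent_iff_not_nested_general S0 S1 h0fin h1fin hgen
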